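/- arXiv:1906.11567 — 7 statements merged into one kernel-verified Lean document; each statement's English description precedes it below -/
import Mathlib

section
/- Let K ≥ 1, n ≥ 1, α ∈ [0,1]. For each i ∈ {1,…,n}, let z_i ∈ ℝ^K be a logit vector, y_i ∈ {1,…,K} a label with one-hot encoding 𝐲_i ∈ Δ_K, and q_i' ∈ Δ_K, and set q_i = (1−α)𝐲_i + α q_i'. Then (1/n)·∑_{i=1}^n SmoothCE(q_i, z_i) = −(1/n)·∑_{i=1}^n log p^{(y_i)}(z_i) + α·(1/n)·∑_{i=1}^n (𝐲_i − q_i')ᵀ z_i. (General Label-Smoothing formulation: the smoothed cross-entropy objective equals the standard cross-entropy loss plus α times the logit penalty R_n = (1/n)∑_i (𝐲_i − q_i')ᵀ z_i.) -/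
open Finset

/-- Softmax of a logit vector. -/
noncomputable def softmax {K : ℕ} (z : Fin K → ℝ) (k : Fin K) : ℝ :=
  Real.exp (z k) / ∑ j, Real.exp (z j)

/-- Smoothed cross-entropy loss. -/
noncomputable def smoothCE {K : ℕ} (q z : Fin K → ℝ) : ℝ :=
  -∑ k, q k * Real.log (softmax z k)

lemma log_softmax {K : ℕ} (hK : 1 ≤ K) (z : Fin K → ℝ) (k : Fin K) :
    Real.log (softmax z k) = z k - Real.log (∑ j, Real.exp (z j)) := by
  have hS : 0 < ∑ j, Real.exp (z j) := by
    apply Finset.sum_pos (fun j _ => Real.exp_pos _)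
    exact Finset.univ_nonempty_iff.mpr ⟨⟨0, hK⟩⟩
  rw [softmax, Real.log_div (Real.exp_ne_zero _) (ne_of_gt hS), Real.log_exp]

lemma per_i {K : ℕ} (hK : 1 ≤ K) (α : ℝ) (z : Fin K → ℝ) (y : Fin K)
    (q' : Fin K → ℝ) (hq'1 : (∑ k, q' k) = 1) (q : Fin K → ℝ)
    (hq : ∀ k, q k = (1 - α) * (if k = y then 1 else 0) + α * q' k) :
    smoothCE q z = -Real.log (softmax z y)
      + α * ∑ k, ((if k = y then (1 : ℝ) else 0) - q' k) * z k := by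
  have hqsum : (∑ k, q k) = 1 := by
    simp only [hq, Finset.sum_add_distrib, ← Finset.mul_sum]
    rw [Finset.sum_ite_eq' _ y (fun _ => (1:ℝ)), hq'1]
    simp
  set L := Real.log (∑ j, Real.exp (z j)) with hL
  have h1 : smoothCE q z = L - ∑ k, q k * z k := by
    rw [smoothCE]
    have : ∀ k ∈ Finset.univ, q k * Real.log (softmax z k) = q k * z k - q k * L := by
      intro k _; rw [log_softmax hK]; ring
    rw [Finset.sum_congr rfl this, Finset.sum_sub_distrib, ← Finset.sum_mul, hqsum]
    ring
  have h2 : (∑ k, q k * z k) = (1 - α) * z y + α * ∑ k, q' k * z k := by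
    simp only [hq, add_mul, Finset.sum_add_distrib]
    congr 1
    · simp only [mul_assoc, ite_mul, one_mul, zero_mul, mul_ite, mul_zero]
      rw [Finset.sum_ite_eq' _ y (fun k => (1-α) * z k)]
      simp
    · rw [Finset.mul_sum]; simp [mul_assoc]
  have h3 : (∑ k, ((if k = y then (1 : ℝ) else 0) - q' k) * z k)
      = z y - ∑ k, q' k * z k := by
    simp only [sub_mul, Finset.sum_sub_distrib, ite_mul, one_mul, zero_mul]
    rw [Finset.sum_ite_eq' _ y z]
    simp
  rw [h1, h2, h3, log_softmax hK]
  ring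

/-- General Label-Smoothing formulation: the smoothed cross-entropy objective equals the
standard cross-entropy loss plus `α` times the logit penalty `Rₙ = (1/n)∑ᵢ (𝐲ᵢ − qᵢ')ᵀ zᵢ`. -/
theorem stmt_0 (K n : ℕ) (hK : 1 ≤ K) (hn : 1 ≤ n) (α : ℝ)
    (hα : α ∈ Set.Icc (0 : ℝ) 1)
    (z : Fin n → Fin K → ℝ) (y : Fin n → Fin K)
    (q' : Fin n → Fin K → ℝ)
    (hq' : ∀ i, (∀ k, 0 ≤ q' i k) ∧ (∑ k, q' i k) = 1)
    (q : Fin n → Fin K → ℝ)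
    (hq : ∀ i k, q i k = (1 - α) * (if k = y i then 1 else 0) + α * q' i k) :
    (1 / (n : ℝ)) * ∑ i, smoothCE (q i) (z i)
      = -((1 / (n : ℝ)) * ∑ i, Real.log (softmax (z i) (y i)))
        + α * ((1 / (n : ℝ)) * ∑ i, ∑ k,
            ((if k = y i then (1 : ℝ) else 0) - q' i k) * z i k) := by
  have h : ∀ i ∈ Finset.univ, smoothCE (q i) (z i)
      = -Real.log (softmax (z i) (y i))
        + α * ∑ k, ((if k = y i then (1 : ℝ) else 0) - q' i k) * z i k :=
    fun i _ => per_i hK α (z i) (y i) (q' i) (hq' i).2 (q i) (hq i)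
  rw [Finset.sum_congr rfl h, Finset.sum_add_distrib, Finset.sum_neg_distrib,
    ← Finset.mul_sum]
  ring
end

section
/- Let K ≥ 1, n ≥ 1, α ∈ [0,1]. For each i ∈ {1,…,n}, let z_i ∈ ℝ^K be a logit vector, y_i ∈ {1,…,K} a label with one-hot encoding 𝐲_i, let y_i^worst ∈ argmin_{k} z_i^{(k)} with one-hot encoding 𝐲_i^worst, and set q_i = (1−α)𝐲_i + α 𝐲_i^worst. Then (1/n)·∑_{i=1}^n SmoothCE(q_i, z_i) = −(1/n)·∑_{i=1}^n log p^{(y_i)}(z_i) + α·(1/n)·∑_{i=1}^n (z_i^{(y_i)} − z_i^{(y_i^worst)}). (Adversarial Label-Smoothing enforces a logit-squeezing penalty R_n = (1/n)∑_i (z_i^{(y_i)} − min_k z_i^{(k)}).) -/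
open Finset

/-- Adversarial Label-Smoothing enforces a logit-squeezing penalty
`Rₙ = (1/n)∑ᵢ (zᵢ^{(yᵢ)} − min_k zᵢ^{(k)})`. -/
theorem stmt_1 (K n : ℕ) (hK : 1 ≤ K) (hn : 1 ≤ n) (α : ℝ)
    (hα : α ∈ Set.Icc (0 : ℝ) 1)
    (z : Fin n → Fin K → ℝ) (y : Fin n → Fin K)
    (yworst : Fin n → Fin K)
    (hworst : ∀ i k, z i (yworst i) ≤ z i k)
    (q : Fin n → Fin K → ℝ)
    (hq : ∀ i k, q i k = (1 - α) * (if k = y i then 1 else 0)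
                          + α * (if k = yworst i then 1 else 0)) :
    (1 / (n : ℝ)) * ∑ i, smoothCE (q i) (z i)
      = -((1 / (n : ℝ)) * ∑ i, Real.log (softmax (z i) (y i)))
        + α * ((1 / (n : ℝ)) * ∑ i, (z i (y i) - z i (yworst i))) := by
  have key : ∀ i, smoothCE (q i) (z i)
      = -Real.log (softmax (z i) (y i)) + α * (z i (y i) - z i (yworst i)) := by
    intro i
    have hsum : ∑ k, q i k * Real.log (softmax (z i) k)
        = (1 - α) * Real.log (softmax (z i) (y i))
          + α * Real.log (softmax (z i) (yworst i)) := by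
      simp only [hq, add_mul, mul_assoc, ite_mul, one_mul, zero_mul]
      rw [Finset.sum_add_distrib]
      simp [← Finset.mul_sum, Finset.sum_ite_eq' Finset.univ]
    rw [smoothCE, hsum, log_softmax hK, log_softmax hK]
    ring
  rw [Finset.sum_congr rfl (fun i _ => key i), Finset.sum_add_distrib,
    ← Finset.mul_sum, Finset.sum_neg_distrib]
  ring
end

section
/- Let d ≥ 1, y ∈ {−1, +1}, μ ∈ ℝ^d, σ_1,…,σ_d > 0, ε ≥ 0, and let P be the product probability measure on ℝ^d whose coordinates are independent with X_j ~ N(y·μ_j, σ_j²). Then for any nonzero w ∈ ℝ^d, the probability under P that y·∑_{j=1}^d w_j X_j − ε·‖w‖₁ > 0 (equivalently, that the linear classifier f_w(x) = sign(wᵀx) is robustly correct against all ℓ∞-perturbations of size ε) equals Ψ( (∑_{j=1}^d w_j μ_j − ε·‖w‖₁) / sqrt(∑_{j=1}^d w_j² σ_j²) ). (Adversarial accuracy of the linear classifier f_w in the fading Gaussian model.) -/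
open Finset MeasureTheory ProbabilityTheory

/-- Ψ : the cumulative distribution function of the standard Gaussian `N(0,1)`. -/
noncomputable def stdGaussCDF (a : ℝ) : ℝ :=
  ∫ t in Set.Iic a, (Real.sqrt (2 * Real.pi))⁻¹ * Real.exp (-t ^ 2 / 2)

/-!
Under the product measure the coordinates are independent Gaussians, so the linear form
`x ↦ ∑ j, y w_j x_j` has law `N(∑ j, y² w_j μ_j, ∑ j, y² w_j² σ_j²)`, and `y² = 1`. The event is
`{∑ j, y w_j x_j > ε‖w‖₁}`, and standardizing `z ↦ (M - z) / √V` turns the mass of `Ioi b` under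
`N(M, V)` into `Ψ((M - b) / √V)`.
-/

open scoped NNReal

theorem ProbabilityTheory.iIndepFun.map_finsetSum_eq_gaussianReal {Ω ι : Type*}
    [MeasurableSpace Ω] {P : Measure Ω} [IsProbabilityMeasure P] {X : ι → Ω → ℝ} {m : ι → ℝ}
    {v : ι → ℝ≥0} (hindep : iIndepFun X P) (hmeas : ∀ i, Measurable (X i))
    (hlaw : ∀ i, P.map (X i) = gaussianReal (m i) (v i)) (s : Finset ι) :
    P.map (∑ i ∈ s, X i) = gaussianReal (∑ i ∈ s, m i) (∑ i ∈ s, v i) := by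
  classical
  induction s using Finset.induction_on with
  | empty => simp [gaussianReal_zero_var, Pi.zero_def]
  | insert a s ha ih =>
    rw [Finset.sum_insert ha, Finset.sum_insert ha, Finset.sum_insert ha]
    exact gaussianReal_add_gaussianReal_of_indepFun
      (hindep.indepFun_finsetSum_of_notMem hmeas ha).symm (hlaw a) ih

theorem map_pi_gaussianReal_sum_mul {ι : Type*} [Fintype ι] (c m : ι → ℝ) (v : ι → ℝ≥0) :
    (Measure.pi fun j => gaussianReal (m j) (v j)).map (fun x => ∑ j, c j * x j)
      = gaussianReal (∑ j, c j * m j) (∑ j, .mk (c j ^ 2) (sq_nonneg _) * v j) := by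
  set P := Measure.pi fun j => gaussianReal (m j) (v j)
  have hindep : iIndepFun (fun j (x : ι → ℝ) => c j * x j) P :=
    iIndepFun_pi fun j => (measurable_const_mul (c j)).aemeasurable
  have hlaw (j : ι) : P.map (fun x => c j * x j)
      = gaussianReal (c j * m j) (.mk (c j ^ 2) (sq_nonneg _) * v j) := by
    rw [← gaussianReal_map_const_mul,
      ← (measurePreserving_eval (fun j => gaussianReal (m j) (v j)) j).map_eq,
      Measure.map_map (by fun_prop) (by fun_prop)]
    rfl
  rw [← hindep.map_finsetSum_eq_gaussianReal (fun j => by fun_prop) hlaw, Finset.sum_fn]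

theorem stdGaussCDF_eq_toReal_gaussianReal_Iic (a : ℝ) :
    stdGaussCDF a = (gaussianReal 0 1 (Set.Iic a)).toReal := by
  rw [gaussianReal_apply_eq_integral _ one_ne_zero,
    ENNReal.toReal_ofReal (integral_nonneg fun _ => gaussianPDFReal_nonneg _ _ _)]
  simp [stdGaussCDF, gaussianPDFReal]

theorem toReal_gaussianReal_Ioi {M : ℝ} {V : ℝ≥0} (hV : V ≠ 0) (b : ℝ) :
    (gaussianReal M V (Set.Ioi b)).toReal = stdGaussCDF ((M - b) / Real.sqrt V) := by
  have hstd : (gaussianReal M V).map (fun z => (M - z) / Real.sqrt V) = gaussianReal 0 1 := by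
    rw [← Function.comp_def (· / Real.sqrt V) (M - ·),
      ← Measure.map_map (by fun_prop) (by fun_prop),
      gaussianReal_map_const_sub, gaussianReal_map_div_const, sub_self, zero_div]
    congr 1
    ext
    simp [hV]
  have hpre : (fun z => (M - z) / Real.sqrt V) ⁻¹' Set.Iio ((M - b) / Real.sqrt V)
      = Set.Ioi b := by
    ext z
    have hsqrt : 0 < Real.sqrt V := Real.sqrt_pos.2 (NNReal.coe_pos.2 (pos_iff_ne_zero.2 hV))
    simp [div_lt_div_iff_of_pos_right hsqrt]
  rw [stdGaussCDF_eq_toReal_gaussianReal_Iic, ← hpre,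
    ← Measure.map_apply (by fun_prop) measurableSet_Iio, hstd,
    measure_congr ((gaussianReal_absolutelyContinuous 0 one_ne_zero).ae_eq Iio_ae_eq_Iic)]

theorem stmt_8_general (d : ℕ) (y : ℝ) (hy : y = 1 ∨ y = -1)
    (μ : Fin d → ℝ) (σ : Fin d → ℝ) (hσ : ∀ j, 0 < σ j)
    (ε : ℝ)
    (w : Fin d → ℝ) (hw : w ≠ 0) :
    ((Measure.pi fun j => gaussianReal (y * μ j) (⟨(σ j) ^ 2, sq_nonneg _⟩ : NNReal))
        {x : Fin d → ℝ | 0 < y * (∑ j, w j * x j) - ε * ∑ j, |w j|}).toReal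
      = stdGaussCDF (((∑ j, w j * μ j) - ε * ∑ j, |w j|)
          / Real.sqrt (∑ j, w j ^ 2 * (σ j) ^ 2)) := by
  have hy2 : y ^ 2 = 1 := by rcases hy with rfl | rfl <;> norm_num
  have hset : {x : Fin d → ℝ | 0 < y * (∑ j, w j * x j) - ε * ∑ j, |w j|}
      = (fun x => ∑ j, y * w j * x j) ⁻¹' Set.Ioi (ε * ∑ j, |w j|) := by
    ext x
    simp only [Set.mem_ofPred_eq, Set.mem_preimage, Set.mem_Ioi, sub_pos, Finset.mul_sum,
      mul_assoc]
  have hmean : ∑ j, y * w j * (y * μ j) = ∑ j, w j * μ j :=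
    Finset.sum_congr rfl fun j _ => by linear_combination w j * μ j * hy2
  have hvar : ((∑ j, .mk ((y * w j) ^ 2) (sq_nonneg _) * ⟨σ j ^ 2, sq_nonneg _⟩ : ℝ≥0) : ℝ)
      = ∑ j, w j ^ 2 * σ j ^ 2 := by
    rw [NNReal.coe_sum]
    refine Finset.sum_congr rfl fun j _ => ?_
    change (y * w j) ^ 2 * σ j ^ 2 = _
    rw [mul_pow, hy2, one_mul]
  have hvar_pos : 0 < ∑ j, w j ^ 2 * σ j ^ 2 := by
    obtain ⟨j, hj⟩ : ∃ j, w j ≠ 0 := Function.ne_iff.mp hw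
    have := hσ j
    exact Finset.sum_pos' (fun j _ => by positivity) ⟨j, Finset.mem_univ _, by positivity⟩
  rw [hset, ← Measure.map_apply (by fun_prop) measurableSet_Ioi,
    map_pi_gaussianReal_sum_mul (v := fun j => ⟨σ j ^ 2, sq_nonneg _⟩),
    toReal_gaussianReal_Ioi (by rw [← NNReal.coe_ne_zero, hvar]; exact hvar_pos.ne'),
    hmean, hvar]

/-- Adversarial accuracy of the linear classifier `f_w` in the fading Gaussian model:
if `X_j ~ N(y μ_j, σ_j²)` independently, then
`P(y·wᵀX − ε‖w‖₁ > 0) = Ψ((wᵀμ − ε‖w‖₁) / sqrt(∑ w_j² σ_j²))`. -/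
theorem stmt_8 (d : ℕ) (hd : 1 ≤ d) (y : ℝ) (hy : y = 1 ∨ y = -1)
    (μ : Fin d → ℝ) (σ : Fin d → ℝ) (hσ : ∀ j, 0 < σ j)
    (ε : ℝ) (hε : 0 ≤ ε)
    (w : Fin d → ℝ) (hw : w ≠ 0) :
    ((Measure.pi fun j => gaussianReal (y * μ j) (⟨(σ j) ^ 2, sq_nonneg _⟩ : NNReal))
        {x : Fin d → ℝ | 0 < y * (∑ j, w j * x j) - ε * ∑ j, |w j|}).toReal
      = stdGaussCDF (((∑ j, w j * μ j) - ε * ∑ j, |w j|)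
          / Real.sqrt (∑ j, w j ^ 2 * (σ j) ^ 2)) :=
  stmt_8_general d y hy μ σ hσ ε w hw
end

section
/- Let μ ∈ ℝ^d, σ_1,…,σ_d > 0, and ε ≥ 0, and define for each nonzero w ∈ ℝ^d the adversarial accuracy acc_ε(f_w) = Ψ( (∑_j w_j μ_j − ε·‖w‖₁) / sqrt(∑_j σ_j² w_j²) ) and Δ(ε) = ∑_{j=1}^d σ_j^{−2}·((|μ_j| − ε)₊)². Then acc_ε(f_w) ≤ Ψ(sqrt(Δ(ε))) for every nonzero w, and if Δ(ε) > 0 equality holds for the most robust linear classifier whose weights are given by w_j = σ_j^{−2}·sign(μ_j)·(|μ_j| − ε)₊. In particular, the optimal adversarial accuracy among linear classifiers in the fading Gaussian model with diagonal covariance is Ψ(sqrt(Δ(ε))). -/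
open Finset MeasureTheory

/-- Adversarial accuracy of the linear classifier `f_w` in the fading Gaussian model,
`acc_ε(f_w) = Ψ((wᵀμ − ε‖w‖₁)/sqrt(∑ σ_j² w_j²))`. -/
noncomputable def accEps (d : ℕ) (μ σ : Fin d → ℝ) (ε : ℝ) (w : Fin d → ℝ) : ℝ :=
  stdGaussCDF (((∑ j, w j * μ j) - ε * ∑ j, |w j|)
    / Real.sqrt (∑ j, (σ j) ^ 2 * w j ^ 2))

/-!
Write `m_j = (|μ_j| − ε)₊`. Coordinatewise `w_j μ_j − ε |w_j| ≤ |w_j| m_j`, and the weighted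
Cauchy–Schwarz inequality `∑ |w_j| m_j ≤ sqrt(∑ σ_j² w_j²) · sqrt(∑ σ_j⁻² m_j²)` bounds the
argument of the increasing function Ψ by `sqrt Δ(ε)`. For `w_j = σ_j⁻² sign(μ_j) m_j` both the
numerator and the variance `∑ σ_j² w_j²` equal `Δ(ε)`, so the argument is `Δ / sqrt Δ = sqrt Δ`.
-/

lemma integrable_stdGaussDensity :
    Integrable fun t : ℝ => (Real.sqrt (2 * Real.pi))⁻¹ * Real.exp (-t ^ 2 / 2) := by
  have h : Integrable fun t : ℝ => Real.exp (-(1 / 2 : ℝ) * t ^ 2) :=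
    integrable_exp_neg_mul_sq (by norm_num)
  simpa [neg_div, div_eq_inv_mul] using h.const_mul (Real.sqrt (2 * Real.pi))⁻¹

lemma stdGaussCDF_mono : Monotone stdGaussCDF := fun _ _ hab =>
  setIntegral_mono_set integrable_stdGaussDensity.integrableOn
    (Filter.Eventually.of_forall fun _ => by positivity)
    (Set.Iic_subset_Iic.2 hab).eventuallyLE

lemma Real.sign_mul_self_eq_abs (r : ℝ) : Real.sign r * r = |r| := by
  rcases lt_trichotomy r 0 with h | rfl | h
  · rw [Real.sign_of_neg h, abs_of_neg h, neg_one_mul]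
  · simp
  · rw [Real.sign_of_pos h, abs_of_pos h, one_mul]

lemma max_zero_mul_self {α : Type*} [Ring α] [LinearOrder α] [IsStrictOrderedRing α] (a : α) :
    max a 0 * a = max a 0 ^ 2 := by
  rcases le_total 0 a with h | h
  · rw [max_eq_left h, sq]
  · rw [max_eq_right h, zero_mul, sq, zero_mul]

lemma abs_sign_mul_max_abs_sub {ε : ℝ} (hε : 0 ≤ ε) (x : ℝ) :
    |Real.sign x| * max (|x| - ε) 0 = max (|x| - ε) 0 := by
  rcases eq_or_ne x 0 with rfl | hx
  · simp [hε]
  · rcases Real.sign_apply_eq_of_ne_zero x hx with h | h <;> simp [h]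

lemma mul_sub_mul_abs_le_abs_mul_max {α : Type*} [CommRing α] [LinearOrder α]
    [IsStrictOrderedRing α] (w x ε : α) :
    w * x - ε * |w| ≤ |w| * max (|x| - ε) 0 :=
  calc w * x - ε * |w| ≤ |w| * (|x| - ε) := by
        nlinarith [show w * x ≤ |w| * |x| from abs_mul w x ▸ le_abs_self (w * x)]
    _ ≤ |w| * max (|x| - ε) 0 := mul_le_mul_of_nonneg_left (le_max_left _ _) (abs_nonneg w)

section

variable {ι : Type*} [Fintype ι]

lemma sum_mul_le_sqrt_mul_sqrt_of_weights (a b σ : ι → ℝ) (hσ : ∀ j, σ j ≠ 0) :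
    ∑ j, a j * b j ≤
      Real.sqrt (∑ j, σ j ^ 2 * a j ^ 2) * Real.sqrt (∑ j, (σ j ^ 2)⁻¹ * b j ^ 2) := by
  have hab : ∀ j, a j * b j = (σ j * a j) * ((σ j)⁻¹ * b j) := fun j => by
    field_simp [hσ j]
  simpa only [hab, mul_pow, inv_pow] using
    Real.sum_mul_le_sqrt_mul_sqrt univ (fun j => σ j * a j) (fun j => (σ j)⁻¹ * b j)

lemma robustMargin_le (μ σ w : ι → ℝ) (hσ : ∀ j, σ j ≠ 0) (ε : ℝ) :
    (∑ j, w j * μ j) - ε * ∑ j, |w j| ≤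
      Real.sqrt (∑ j, σ j ^ 2 * w j ^ 2) *
        Real.sqrt (∑ j, (σ j ^ 2)⁻¹ * max (|μ j| - ε) 0 ^ 2) :=
  calc (∑ j, w j * μ j) - ε * ∑ j, |w j|
      = ∑ j, (w j * μ j - ε * |w j|) := by rw [mul_sum, sum_sub_distrib]
    _ ≤ ∑ j, |w j| * max (|μ j| - ε) 0 :=
        sum_le_sum fun j _ => mul_sub_mul_abs_le_abs_mul_max (w j) (μ j) ε
    _ ≤ _ := by
        simpa only [sq_abs] using sum_mul_le_sqrt_mul_sqrt_of_weights
          (fun j => |w j|) (fun j => max (|μ j| - ε) 0) σ hσ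

variable {μ σ : ι → ℝ} {ε : ℝ}

lemma robustMargin_optimal (hε : 0 ≤ ε) :
    (∑ j, (σ j ^ 2)⁻¹ * Real.sign (μ j) * max (|μ j| - ε) 0 * μ j) -
        ε * ∑ j, |(σ j ^ 2)⁻¹ * Real.sign (μ j) * max (|μ j| - ε) 0| =
      ∑ j, (σ j ^ 2)⁻¹ * max (|μ j| - ε) 0 ^ 2 := by
  rw [mul_sum, ← sum_sub_distrib]
  refine sum_congr rfl fun j _ => ?_
  rw [abs_mul, abs_mul, abs_of_nonneg (by positivity : 0 ≤ (σ j ^ 2)⁻¹),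
    abs_of_nonneg (le_max_right (|μ j| - ε) 0), mul_assoc _ |_|, abs_sign_mul_max_abs_sub hε,
    ← max_zero_mul_self (|μ j| - ε), ← Real.sign_mul_self_eq_abs]
  ring

lemma variance_optimal (hσ : ∀ j, σ j ≠ 0) (hε : 0 ≤ ε) :
    ∑ j, σ j ^ 2 * ((σ j ^ 2)⁻¹ * Real.sign (μ j) * max (|μ j| - ε) 0) ^ 2 =
      ∑ j, (σ j ^ 2)⁻¹ * max (|μ j| - ε) 0 ^ 2 := by
  refine sum_congr rfl fun j _ => ?_
  have hsq : (Real.sign (μ j) * max (|μ j| - ε) 0) ^ 2 = max (|μ j| - ε) 0 ^ 2 := by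
    rw [← sq_abs, abs_mul, abs_of_nonneg (le_max_right (|μ j| - ε) 0),
      abs_sign_mul_max_abs_sub hε]
  rw [mul_assoc, mul_pow, hsq]
  field_simp [hσ j]

end

/-- `acc_ε(f_w) ≤ Ψ(sqrt(Δ(ε)))` for every nonzero `w`, with equality (when `Δ(ε) > 0`)
for the most robust linear classifier `w_j = σ_j⁻² sign(μ_j)(|μ_j| − ε)₊`; so the optimal
adversarial accuracy among linear classifiers is `Ψ(sqrt(Δ(ε)))`. -/
theorem stmt_10 (d : ℕ) (μ σ : Fin d → ℝ) (hσ : ∀ j, 0 < σ j)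
    (ε : ℝ) (hε : 0 ≤ ε) :
    (∀ w : Fin d → ℝ, w ≠ 0 →
      accEps d μ σ ε w
        ≤ stdGaussCDF (Real.sqrt (∑ j, ((σ j) ^ 2)⁻¹ * (max (|μ j| - ε) 0) ^ 2)))
    ∧ (0 < ∑ j, ((σ j) ^ 2)⁻¹ * (max (|μ j| - ε) 0) ^ 2 →
        (fun j => ((σ j) ^ 2)⁻¹ * Real.sign (μ j) * max (|μ j| - ε) 0) ≠ 0
        ∧ accEps d μ σ ε (fun j => ((σ j) ^ 2)⁻¹ * Real.sign (μ j) * max (|μ j| - ε) 0)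
            = stdGaussCDF (Real.sqrt (∑ j, ((σ j) ^ 2)⁻¹ * (max (|μ j| - ε) 0) ^ 2))) := by
  have hσ0 : ∀ j, σ j ≠ 0 := fun j => (hσ j).ne'
  refine ⟨fun w _ => stdGaussCDF_mono ?_, fun hΔ => ⟨fun hw => ?_, ?_⟩⟩
  · exact div_le_of_le_mul₀ (Real.sqrt_nonneg _) (Real.sqrt_nonneg _)
      ((robustMargin_le μ σ w hσ0 ε).trans_eq (mul_comm _ _))
  · have hvar := variance_optimal (μ := μ) hσ0 hε
    simp only [congrFun hw, Pi.zero_apply, ne_eq, OfNat.ofNat_ne_zero, not_false_eq_true,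
      zero_pow, mul_zero, sum_const_zero] at hvar
    exact hΔ.ne hvar
  · rw [accEps, robustMargin_optimal hε, variance_optimal hσ0 hε, Real.div_sqrt]
end

section
/- Let Σ be a positive definite real d×d matrix, a ∈ ℝ^d, and ε ≥ 0. Then the minimum of ε·‖w‖₁ − wᵀa over all w ∈ ℝ^d with wᵀΣw ≤ 1 equals the negative of the minimum of sqrt((z − a)ᵀ Σ^{−1} (z − a)) over all z ∈ ℝ^d with ‖z‖_∞ ≤ ε; i.e., min_{wᵀΣw ≤ 1} (ε‖w‖₁ − wᵀa) = − min_{‖z‖_∞ ≤ ε} ‖z − a‖_{Σ^{−1}}, where ‖v‖_{Σ^{−1}} := sqrt(vᵀ Σ^{−1} v). -/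
/-!
Let `z*` minimise `‖z - a‖_{Σ⁻¹}` over the box `‖z‖_∞ ≤ ε` (a compact set), with value `t`.
Weak duality: for `wᵀΣw ≤ 1`, Hölder gives `ε‖w‖₁ ≥ wᵀz*`, and Cauchy–Schwarz in the
`Σ`-geometry gives `wᵀ(z* - a) ≥ -t`. For attainment put `g = Σ⁻¹(z* - a)` and `w = -g / t`.
The first-order optimality condition `gᵀz* ≤ gᵀz` on the box, tested at the vertex
`z = -ε sign g`, yields `ε‖g‖₁ ≤ -gᵀz*`, whence `ε‖w‖₁ - wᵀa ≤ -gᵀ(z* - a) / t = -t`.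
-/

open Matrix Metric Filter Topology

section

variable {n : Type*} [Fintype n]

lemma dotProduct_le_sum_abs_mul_norm (w z : n → ℝ) : w ⬝ᵥ z ≤ (∑ i, |w i|) * ‖z‖ := by
  rw [dotProduct, Finset.sum_mul]
  refine Finset.sum_le_sum fun i _ => ?_
  calc w i * z i ≤ |w i| * |z i| := (le_abs_self _).trans (abs_mul _ _).le
    _ ≤ |w i| * ‖z‖ := by gcongr; exact norm_le_pi_norm z i

lemma exists_norm_le_dotProduct_eq (g : n → ℝ) {ε : ℝ} (hε : 0 ≤ ε) :
    ∃ z : n → ℝ, ‖z‖ ≤ ε ∧ g ⬝ᵥ z = -(ε * ∑ i, |g i|) := by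
  refine ⟨fun i => if 0 ≤ g i then -ε else ε, (pi_norm_le_iff_of_nonneg hε).2 fun i => ?_, ?_⟩
  · split_ifs <;> simp [abs_of_nonneg hε]
  · rw [dotProduct, Finset.mul_sum, ← Finset.sum_neg_distrib]
    refine Finset.sum_congr rfl fun i _ => ?_
    split_ifs with h
    · rw [abs_of_nonneg h]; ring
    · rw [abs_of_neg (not_le.1 h)]; ring

lemma dotProduct_mulVec_add_smul {M : Matrix n n ℝ} (hM : M.IsSymm) (u v : n → ℝ) (s : ℝ) :
    (u + s • v) ⬝ᵥ M *ᵥ (u + s • v) =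
      u ⬝ᵥ M *ᵥ u + 2 * s * (M *ᵥ u ⬝ᵥ v) + s ^ 2 * (v ⬝ᵥ M *ᵥ v) := by
  have hsymm : u ⬝ᵥ M *ᵥ v = M *ᵥ u ⬝ᵥ v := by
    rw [dotProduct_mulVec, ← mulVec_transpose, hM.eq]
  simp only [mulVec_add, mulVec_smul, dotProduct_add, add_dotProduct, dotProduct_smul,
    smul_dotProduct, smul_eq_mul, hsymm, dotProduct_comm v (M *ᵥ u)]
  ring

lemma nonneg_of_forall_mul_add_sq_mul_nonneg {b c : ℝ}
    (h : ∀ s ∈ Set.Ioc (0 : ℝ) 1, 0 ≤ s * b + s ^ 2 * c) : 0 ≤ b := by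
  have hlim : Tendsto (fun s : ℝ => b + s * c) (𝓝[>] 0) (𝓝 b) :=
    ((by fun_prop : Continuous fun s : ℝ => b + s * c).tendsto' 0 b (by simp)).mono_left
      nhdsWithin_le_nhds
  refine ge_of_tendsto hlim ?_
  filter_upwards [Ioc_mem_nhdsGT zero_lt_one] with s hs
  have : 0 ≤ s * (b + s * c) := by linarith [h s hs]
  exact nonneg_of_mul_nonneg_right (by linarith) hs.1

lemma IsMinOn.dotProduct_mulVec_sub_nonneg {M : Matrix n n ℝ} (hM : M.IsSymm) {K : Set (n → ℝ)}
    (hK : Convex ℝ K) {a zs z : n → ℝ}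
    (hmin : IsMinOn (fun z => (z - a) ⬝ᵥ M *ᵥ (z - a)) K zs) (hzs : zs ∈ K) (hz : z ∈ K) :
    0 ≤ M *ᵥ (zs - a) ⬝ᵥ (z - zs) := by
  refine nonneg_of_forall_mul_add_sq_mul_nonneg (c := (z - zs) ⬝ᵥ M *ᵥ (z - zs) / 2)
    fun s hs => ?_
  have hmem : zs + s • (z - zs) ∈ K := by
    simpa using hK.add_smul_sub_mem hzs hz ⟨hs.1.le, hs.2⟩
  have := isMinOn_iff.1 hmin _ hmem
  rw [show zs + s • (z - zs) - a = (zs - a) + s • (z - zs) by abel,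
    dotProduct_mulVec_add_smul hM] at this
  linarith

lemma Matrix.PosSemidef.dotProduct_mulVec_self_nonneg {M : Matrix n n ℝ} (hM : M.PosSemidef)
    (x : n → ℝ) : 0 ≤ x ⬝ᵥ M *ᵥ x := by
  simpa using hM.dotProduct_mulVec_nonneg x

lemma Matrix.PosSemidef.sq_dotProduct_mulVec_le {S : Matrix n n ℝ} (hS : S.PosSemidef)
    (x y : n → ℝ) :
    (x ⬝ᵥ S *ᵥ y) ^ 2 ≤ (x ⬝ᵥ S *ᵥ x) * (y ⬝ᵥ S *ᵥ y) := by
  let := S.toSeminormedAddCommGroup hS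
  let := S.toInnerProductSpace hS
  have hinner : ∀ u v : n → ℝ, inner ℝ u v = u ⬝ᵥ S *ᵥ v := fun u v => by
    change S *ᵥ v ⬝ᵥ star u = _
    rw [dotProduct_comm, star_trivial]
  have := real_inner_mul_inner_self_le x y
  rwa [hinner, hinner, hinner, ← sq] at this

variable [DecidableEq n] {S : Matrix n n ℝ}

lemma Matrix.mulVec_nonsing_inv_mulVec (hS : IsUnit S.det) (u : n → ℝ) : S *ᵥ (S⁻¹ *ᵥ u) = u := by
  rw [mulVec_mulVec, mul_nonsing_inv _ hS, one_mulVec]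

lemma Matrix.PosDef.isUnit_det (hS : S.PosDef) : IsUnit S.det :=
  (isUnit_iff_isUnit_det S).1 hS.isUnit

lemma Matrix.PosDef.sq_dotProduct_le (hS : S.PosDef) (w u : n → ℝ) :
    (w ⬝ᵥ u) ^ 2 ≤ (w ⬝ᵥ S *ᵥ w) * (u ⬝ᵥ S⁻¹ *ᵥ u) := by
  have := hS.posSemidef.sq_dotProduct_mulVec_le w (S⁻¹ *ᵥ u)
  rwa [mulVec_nonsing_inv_mulVec hS.isUnit_det, dotProduct_comm (S⁻¹ *ᵥ u)] at this

lemma neg_sqrt_le_sum_abs_sub_dotProduct (hS : S.PosDef) {a z w : n → ℝ} {ε : ℝ}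
    (hz : ‖z‖ ≤ ε) (hw : w ⬝ᵥ S *ᵥ w ≤ 1) :
    -√((z - a) ⬝ᵥ S⁻¹ *ᵥ (z - a)) ≤ ε * ∑ j, |w j| - w ⬝ᵥ a := by
  have hholder : w ⬝ᵥ z ≤ ε * ∑ j, |w j| := by
    rw [mul_comm]
    exact (dotProduct_le_sum_abs_mul_norm w z).trans
      (mul_le_mul_of_nonneg_left hz (Finset.sum_nonneg fun j _ => abs_nonneg _))
  have hcs : |w ⬝ᵥ (z - a)| ≤ √((z - a) ⬝ᵥ S⁻¹ *ᵥ (z - a)) :=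
    Real.abs_le_sqrt <| (hS.sq_dotProduct_le w (z - a)).trans <|
      mul_le_of_le_one_left (hS.inv.posSemidef.dotProduct_mulVec_self_nonneg _) hw
  rw [dotProduct_sub] at hcs
  linarith [neg_abs_le (w ⬝ᵥ z - w ⬝ᵥ a)]

lemma exists_sum_abs_sub_dotProduct_le_neg_sqrt (hS : S.PosDef) {a zs : n → ℝ} {ε : ℝ}
    (hmin : IsMinOn (fun z => (z - a) ⬝ᵥ S⁻¹ *ᵥ (z - a)) (closedBall 0 ε) zs)
    (hzs : zs ∈ closedBall 0 ε) :
    ∃ w : n → ℝ, w ⬝ᵥ S *ᵥ w ≤ 1 ∧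
      ε * ∑ j, |w j| - w ⬝ᵥ a ≤ -√((zs - a) ⬝ᵥ S⁻¹ *ᵥ (zs - a)) := by
  have hε : 0 ≤ ε := nonempty_closedBall.1 ⟨zs, hzs⟩
  set g := S⁻¹ *ᵥ (zs - a)
  set t := √((zs - a) ⬝ᵥ g)
  have ht : t ^ 2 = g ⬝ᵥ (zs - a) := by
    rw [Real.sq_sqrt (hS.inv.posSemidef.dotProduct_mulVec_self_nonneg _), dotProduct_comm]
  have hSg : S *ᵥ g = zs - a := mulVec_nonsing_inv_mulVec hS.isUnit_det _
  obtain ⟨z, hz, hgz⟩ := exists_norm_le_dotProduct_eq g hε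
  have hvi : g ⬝ᵥ zs ≤ g ⬝ᵥ z := by
    have := hmin.dotProduct_mulVec_sub_nonneg
      (isHermitian_iff_isSymm.1 hS.inv.isHermitian) (convex_closedBall 0 ε) hzs
      (mem_closedBall_zero_iff.2 hz)
    rw [dotProduct_sub] at this
    linarith
  -- For `t = 0` the junk value `t⁻¹ = 0` makes the witness `0`, and both computations still hold.
  refine ⟨-t⁻¹ • g, ?_, ?_⟩
  · rw [mulVec_smul, smul_dotProduct, dotProduct_smul, hSg, ← ht, smul_eq_mul, smul_eq_mul,
      ← mul_assoc, neg_mul_neg, ← sq, inv_pow]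
    exact inv_mul_le_one
  · have ht0 : 0 ≤ t := Real.sqrt_nonneg _
    have habs : ∑ j, |(-t⁻¹ • g) j| = t⁻¹ * ∑ j, |g j| := by
      simp only [Pi.smul_apply, smul_eq_mul, abs_mul, abs_neg, abs_inv, Finset.mul_sum,
        abs_of_nonneg ht0]
    calc ε * ∑ j, |(-t⁻¹ • g) j| - -t⁻¹ • g ⬝ᵥ a
        = t⁻¹ * (ε * ∑ j, |g j| + g ⬝ᵥ a) := by
          rw [habs, smul_dotProduct, smul_eq_mul]; ring
      _ ≤ t⁻¹ * -(g ⬝ᵥ (zs - a)) := by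
          gcongr
          rw [dotProduct_sub]
          linarith
      _ = -t := by rw [← ht, mul_neg, inv_mul_eq_div, sq, mul_self_div_self]

lemma isLeast_sum_abs_sub_dotProduct (hS : S.PosDef) {a zs : n → ℝ} {ε : ℝ}
    (hmin : IsMinOn (fun z => (z - a) ⬝ᵥ S⁻¹ *ᵥ (z - a)) (closedBall 0 ε) zs)
    (hzs : zs ∈ closedBall 0 ε) :
    IsLeast {v | ∃ w : n → ℝ, w ⬝ᵥ S *ᵥ w ≤ 1 ∧ v = ε * ∑ j, |w j| - w ⬝ᵥ a}
      (-√((zs - a) ⬝ᵥ S⁻¹ *ᵥ (zs - a))) := by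
  have hweak {w : n → ℝ} (hw : w ⬝ᵥ S *ᵥ w ≤ 1) :=
    neg_sqrt_le_sum_abs_sub_dotProduct (a := a) hS (mem_closedBall_zero_iff.1 hzs) hw
  obtain ⟨w, hw, hw_le⟩ := exists_sum_abs_sub_dotProduct_le_neg_sqrt hS hmin hzs
  refine ⟨⟨w, hw, le_antisymm (hweak hw) hw_le⟩, ?_⟩
  rintro _ ⟨w', hw', rfl⟩
  exact hweak hw'

end

/-- Duality for the robust linear objective: for positive definite `Σ`,
`min_{wᵀΣw ≤ 1} (ε‖w‖₁ − wᵀa) = − min_{‖z‖_∞ ≤ ε} ‖z − a‖_{Σ⁻¹}`. -/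
theorem stmt_11 (d : ℕ) (S : Matrix (Fin d) (Fin d) ℝ) (hS : S.PosDef)
    (a : Fin d → ℝ) (ε : ℝ) (hε : 0 ≤ ε) :
    sInf {v : ℝ | ∃ w : Fin d → ℝ, w ⬝ᵥ (S *ᵥ w) ≤ 1 ∧
        v = ε * (∑ j, |w j|) - w ⬝ᵥ a}
      = - sInf {v : ℝ | ∃ z : Fin d → ℝ, (∀ i, |z i| ≤ ε) ∧
          v = Real.sqrt ((z - a) ⬝ᵥ (S⁻¹ *ᵥ (z - a)))} := by
  set Q : (Fin d → ℝ) → ℝ := fun z => (z - a) ⬝ᵥ S⁻¹ *ᵥ (z - a)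
  have hbox (z : Fin d → ℝ) : (∀ i, |z i| ≤ ε) ↔ z ∈ closedBall 0 ε := by
    simp only [mem_closedBall_zero_iff, pi_norm_le_iff_of_nonneg hε, Real.norm_eq_abs]
  obtain ⟨zs, hzs, hmin⟩ := (isCompact_closedBall (0 : Fin d → ℝ) ε).exists_isMinOn
    (nonempty_closedBall.2 hε) (by fun_prop : Continuous Q).continuousOn
  have hdual : IsLeast {v | ∃ z : Fin d → ℝ, (∀ i, |z i| ≤ ε) ∧ v = √(Q z)} (√(Q zs)) := by
    refine ⟨⟨zs, (hbox zs).2 hzs, rfl⟩, ?_⟩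
    rintro _ ⟨z, hz, rfl⟩
    exact Real.sqrt_le_sqrt (hmin ((hbox z).1 hz))
  rw [(isLeast_sum_abs_sub_dotProduct hS hmin hzs).csInf_eq, hdual.csInf_eq]
end

section
/- Let z ∈ ℝ^K be a logit vector with softmax p = softmax(z), let y ∈ {1,…,K}, α ∈ [0,1], and let k* ∈ argmin_{k} z_k. Then the maximum of SmoothCE(q, z) over all q in the uncertainty set {q ∈ Δ_K : q^{(y)} ≥ 1−α} equals −(1−α)·log p^{(y)} − α·log p^{(k*)}, and it is attained at q = (1−α)·δ_y + α·δ_{k*}. (Analytic solution of the inner maximization defining Adversarial Label-Smoothing.) -/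
open Finset

/-- Analytic solution of the inner maximization defining Adversarial Label-Smoothing:
for `k* ∈ argmin_k z_k`, the maximum of `SmoothCE(q, z)` over
`{q ∈ Δ_K : q^{(y)} ≥ 1−α}` equals `−(1−α)log p^{(y)} − α log p^{(k*)}`, attained at
`q = (1−α)δ_y + αδ_{k*}`. -/
theorem stmt_17 (K : ℕ) (hK : 1 ≤ K) (z : Fin K → ℝ) (y : Fin K) (α : ℝ)
    (hα : α ∈ Set.Icc (0 : ℝ) 1)
    (kstar : Fin K) (hkstar : ∀ k, z kstar ≤ z k) :
    IsGreatest {v : ℝ | ∃ q : Fin K → ℝ, (∀ k, 0 ≤ q k) ∧ (∑ k, q k) = 1 ∧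
        1 - α ≤ q y ∧ v = smoothCE q z}
      (-((1 - α) * Real.log (softmax z y)) - α * Real.log (softmax z kstar))
    ∧ smoothCE
        (fun k => (1 - α) * (if k = y then 1 else 0) + α * (if k = kstar then 1 else 0)) z
      = -((1 - α) * Real.log (softmax z y)) - α * Real.log (softmax z kstar) := by
  obtain ⟨hα0, hα1⟩ := hα
  have hne : (Finset.univ : Finset (Fin K)).Nonempty := ⟨⟨0, hK⟩, Finset.mem_univ _⟩
  have hS : 0 < ∑ j, Real.exp (z j) :=
    Finset.sum_pos (fun j _ => Real.exp_pos _) hne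
  set L := Real.log (∑ j, Real.exp (z j)) with hL
  have hlog : ∀ k, Real.log (softmax z k) = z k - L := by
    intro k
    rw [softmax, Real.log_div (Real.exp_ne_zero _) (ne_of_gt hS), Real.log_exp]
  have hCE : ∀ q : Fin K → ℝ, (∑ k, q k) = 1 →
      smoothCE q z = L - ∑ k, q k * z k := by
    intro q hq
    calc smoothCE q z = -∑ k, (q k * z k - q k * L) := by
          unfold smoothCE
          congr 1
          refine Finset.sum_congr rfl fun k _ => ?_
          rw [hlog]; ring
      _ = -((∑ k, q k * z k) - (∑ k, q k) * L) := by
          rw [Finset.sum_sub_distrib, ← Finset.sum_mul]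
      _ = L - ∑ k, q k * z k := by rw [hq]; ring
  have htarget : -((1 - α) * Real.log (softmax z y)) - α * Real.log (softmax z kstar)
      = L - ((1 - α) * z y + α * z kstar) := by
    rw [hlog, hlog]; ring
  set q0 : Fin K → ℝ := fun k =>
    (1 - α) * (if k = y then 1 else 0) + α * (if k = kstar then 1 else 0) with hq0
  have hq0sum : (∑ k, q0 k) = 1 := by
    simp [hq0, Finset.sum_add_distrib, ← Finset.mul_sum, Finset.sum_ite_eq']
  have hq0val : smoothCE q0 z
      = -((1 - α) * Real.log (softmax z y)) - α * Real.log (softmax z kstar) := by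
    rw [hCE q0 hq0sum, htarget]
    congr 1
    simp [hq0, add_mul, mul_assoc, Finset.sum_add_distrib, ite_mul,
      Finset.sum_ite_eq', ← Finset.mul_sum]
  refine ⟨⟨⟨q0, fun k => ?_, hq0sum, ?_, hq0val.symm⟩, ?_⟩, hq0val⟩
  · simp only [hq0]
    have h1 : (0:ℝ) ≤ (1 - α) * (if k = y then (1:ℝ) else 0) :=
      mul_nonneg (by linarith) (by positivity)
    have h2 : (0:ℝ) ≤ α * (if k = kstar then (1:ℝ) else 0) :=
      mul_nonneg hα0 (by positivity)
    linarith
  · simp only [hq0, if_pos rfl]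
    rcases eq_or_ne y kstar with h | h
    · simp [h]; linarith
    · simp [h]
  · rintro v ⟨q, hqnn, hqsum, hqy, rfl⟩
    rw [hCE q hqsum, htarget]
    have hsplit : (∑ k, q k * z k) = q y * z y + ∑ k ∈ Finset.univ.erase y, q k * z k := by
      rw [← Finset.add_sum_erase _ _ (Finset.mem_univ y)]
    have hrest : (∑ k ∈ Finset.univ.erase y, q k * z k)
        ≥ (∑ k ∈ Finset.univ.erase y, q k) * z kstar := by
      rw [Finset.sum_mul]
      refine Finset.sum_le_sum fun k _ => ?_
      exact mul_le_mul_of_nonneg_left (hkstar k) (hqnn k)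
    have hrestsum : (∑ k ∈ Finset.univ.erase y, q k) = 1 - q y := by
      have := Finset.add_sum_erase _ q (Finset.mem_univ y)
      rw [hqsum] at this
      linarith
    have hkey : (1 - α) * z y + α * z kstar ≤ ∑ k, q k * z k := by
      rw [hsplit]
      rw [hrestsum] at hrest
      have hzz := hkstar y
      nlinarith [mul_nonneg (by linarith : (0:ℝ) ≤ q y - (1 - α))
        (by linarith : (0:ℝ) ≤ z y - z kstar)]
    linarith
end

section
/- Let K = 2 and for each i ∈ {1,…,n} let z_i ∈ ℝ² be a logit vector and y_i ∈ {1,2} a label with one-hot encoding 𝐲_i, and suppose the model is perfect in the sense that z_i^{(y_i)} ≥ 0 and z_i^{(k)} ≤ 0 for the label k ≠ y_i. Then the standard Label-Smoothing penalty satisfies ∑_{i=1}^n ((K·𝐲_i − 𝟙)/(K−1))ᵀ z_i = ∑_{i=1}^n (2·𝐲_i − 𝟙)ᵀ z_i = ∑_{i=1}^n ‖z_i‖₁, i.e., standard Label-Smoothing with a perfect binary model induces an ℓ₁-norm penalty on the logits. -/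
open Finset

/-- Standard Label-Smoothing with a perfect binary model (`K = 2`) induces an
ℓ₁-norm penalty on the logits:
`∑ᵢ ((K𝐲ᵢ − 𝟙)/(K−1))ᵀ zᵢ = ∑ᵢ (2𝐲ᵢ − 𝟙)ᵀ zᵢ = ∑ᵢ ‖zᵢ‖₁`. -/
theorem stmt_18 (n : ℕ) (z : Fin n → Fin 2 → ℝ) (y : Fin n → Fin 2)
    (hperf : ∀ i, 0 ≤ z i (y i) ∧ ∀ k, k ≠ y i → z i k ≤ 0) :
    (∑ i, ∑ k, ((2 * (if k = y i then (1 : ℝ) else 0) - 1) / (2 - 1)) * z i k)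
        = (∑ i, ∑ k, (2 * (if k = y i then (1 : ℝ) else 0) - 1) * z i k)
    ∧ (∑ i, ∑ k, (2 * (if k = y i then (1 : ℝ) else 0) - 1) * z i k)
        = ∑ i, ∑ k, |z i k| := by
  constructor
  · norm_num
  · refine Finset.sum_congr rfl fun i _ => Finset.sum_congr rfl fun k _ => ?_
    obtain ⟨h1, h2⟩ := hperf i
    by_cases hk : k = y i
    · subst hk; rw [abs_of_nonneg h1, if_pos rfl]; ring
    · have := h2 k hk
      rw [abs_of_nonpos this, if_neg hk]; ring
end
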